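/- arXiv:quant-ph/0304007 — 3 statements merged into one kernel-verified Lean document; each statement's English description precedes it below -/
import Mathlib

section
/- For every separable density operator ρ_AC on a finite-dimensional Hilbert space H_A ⊗ H_C, there exist a finite-dimensional Hilbert space H_B and a density operator ρ_ABC on H_A ⊗ H_B ⊗ H_C with Tr_B(ρ_ABC) = ρ_AC and I(A:C|B) = S(ρ_AB) + S(ρ_BC) − S(ρ_ABC) − S(ρ_B) = 0. -/
open Matrix
open scoped Kronecker ComplexOrder

noncomputable section

namespace SSA

/-! ### Classical notions -/

/-- Shannon entropy (base 2) of a distribution on a finite set; `0 log 0 = 0`. -/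
def shannon {X : Type} [Fintype X] (P : X → ℝ) : ℝ := -∑ x, P x * Real.logb 2 (P x)

/-- Mutual information `I(X:Y)` of a joint distribution on a product of finite sets. -/
def mutInfo {X Y : Type} [Fintype X] [Fintype Y] (P : X × Y → ℝ) : ℝ :=
  shannon (fun x => ∑ y, P (x, y)) + shannon (fun y => ∑ x, P (x, y)) - shannon P

/-- Marginal on the first two factors. -/
def margAB {A B C : Type} [Fintype A] [Fintype B] [Fintype C] (P : A × B × C → ℝ) :
    A × B → ℝ := fun x => ∑ c, P (x.1, x.2, c)

/-- Marginal on the last two factors. -/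
def margBC {A B C : Type} [Fintype A] [Fintype B] [Fintype C] (P : A × B × C → ℝ) :
    B × C → ℝ := fun x => ∑ a, P (a, x.1, x.2)

/-- Marginal on the middle factor. -/
def margB {A B C : Type} [Fintype A] [Fintype B] [Fintype C] (P : A × B × C → ℝ) :
    B → ℝ := fun b => ∑ a, ∑ c, P (a, b, c)

/-- Conditional mutual information
`I(A:C|B) = ∑_b P_B(b) · I(A|_{B=b} : C|_{B=b})`, where the conditioned pair has
distribution `P_{AC|B}(a,c|b) = P(a,b,c)/P_B(b)`. -/
def condMutInfo {A B C : Type} [Fintype A] [Fintype B] [Fintype C] (P : A × B × C → ℝ) : ℝ :=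
  ∑ b, margB P b * mutInfo (fun ac : A × C => P (ac.1, b, ac.2) / margB P b)

/-! ### Quantum notions -/

open Classical in
/-- Functional calculus for (Hermitian) matrices, via the spectral decomposition. -/
def matFun {n : Type} [Fintype n] [DecidableEq n] (f : ℝ → ℝ) (A : Matrix n n ℂ) :
    Matrix n n ℂ :=
  if h : A.IsHermitian then
    (h.eigenvectorUnitary : Matrix n n ℂ) *
      Matrix.diagonal (fun i => (f (h.eigenvalues i) : ℂ)) *
      (star (h.eigenvectorUnitary : Matrix n n ℂ))
  else 0

open Classical in
/-- Von Neumann entropy (base 2): `S(ρ) = -Tr(ρ log₂ ρ) = -∑ λᵢ log₂ λᵢ`. -/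
def vnEntropy {n : Type} [Fintype n] [DecidableEq n] (ρ : Matrix n n ℂ) : ℝ :=
  if h : ρ.IsHermitian then -∑ i, h.eigenvalues i * Real.logb 2 (h.eigenvalues i) else 0

/-- A density operator: positive semidefinite with unit trace. -/
def IsDensity {n : Type} [Fintype n] (ρ : Matrix n n ℂ) : Prop :=
  ρ.PosSemidef ∧ ρ.trace = 1

open Classical in
/-- Quantum relative entropy `S(ρ‖σ) = Tr(ρ(log₂ ρ - log₂ σ))` when
`supp ρ ⊆ supp σ` (expressed as `ker σ ⊆ ker ρ`), and `+∞` otherwise. -/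
def qRelEnt {n : Type} [Fintype n] [DecidableEq n] (ρ σ : Matrix n n ℂ) : EReal :=
  if (∀ v : n → ℂ, σ.mulVec v = 0 → ρ.mulVec v = 0) then
    ((((ρ * (matFun (Real.logb 2) ρ - matFun (Real.logb 2) σ)).trace).re : ℝ) : EReal)
  else ⊤

/-- Partial trace over the second tensor factor. -/
def ptraceSecond {K E : Type} [Fintype K] [Fintype E]
    (ρ : Matrix (K × E) (K × E) ℂ) : Matrix K K ℂ :=
  Matrix.of fun k k' => ∑ e, ρ (k, e) (k', e)

/-- Partial trace over the first tensor factor. -/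
def ptraceFirst {K E : Type} [Fintype K] [Fintype E]
    (ρ : Matrix (K × E) (K × E) ℂ) : Matrix E E ℂ :=
  Matrix.of fun e e' => ∑ k, ρ (k, e) (k, e')

section Tripartite
variable {A B C : Type} [Fintype A] [Fintype B] [Fintype C]

/-- Reduced state `ρ_AB` of a tripartite state. -/
def rAB (ρ : Matrix (A × B × C) (A × B × C) ℂ) : Matrix (A × B) (A × B) ℂ :=
  Matrix.of fun x y => ∑ c, ρ (x.1, x.2, c) (y.1, y.2, c)

/-- Reduced state `ρ_BC` of a tripartite state. -/
def rBC (ρ : Matrix (A × B × C) (A × B × C) ℂ) : Matrix (B × C) (B × C) ℂ :=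
  Matrix.of fun x y => ∑ a, ρ (a, x.1, x.2) (a, y.1, y.2)

/-- Reduced state `ρ_B` of a tripartite state. -/
def rB (ρ : Matrix (A × B × C) (A × B × C) ℂ) : Matrix B B ℂ :=
  Matrix.of fun b b' => ∑ a, ∑ c, ρ (a, b, c) (a, b', c)

/-- Reduced state `ρ_A` of a tripartite state. -/
def rA (ρ : Matrix (A × B × C) (A × B × C) ℂ) : Matrix A A ℂ :=
  Matrix.of fun a a' => ∑ b, ∑ c, ρ (a, b, c) (a', b, c)

/-- Reduced state `ρ_AC` of a tripartite state. -/
def rAC (ρ : Matrix (A × B × C) (A × B × C) ℂ) : Matrix (A × C) (A × C) ℂ :=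
  Matrix.of fun x y => ∑ b, ρ (x.1, b, x.2) (y.1, b, y.2)

end Tripartite

/-- A quantum operation (CPTP map), characterised by a Kraus representation. -/
def IsQuantumOp {n m : Type} [Fintype n] [DecidableEq n] [Fintype m] [DecidableEq m]
    (T : Matrix n n ℂ → Matrix m m ℂ) : Prop :=
  ∃ (k : ℕ) (A : Fin k → Matrix m n ℂ),
    (∀ ρ, T ρ = ∑ i, A i * ρ * (A i)ᴴ) ∧ (∑ i, (A i)ᴴ * A i = 1)

/-- A completely positive map, characterised by a Kraus representation. -/
def IsCompletelyPositive {n m : Type} [Fintype n] [DecidableEq n] [Fintype m] [DecidableEq m]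
    (T : Matrix n n ℂ → Matrix m m ℂ) : Prop :=
  ∃ (k : ℕ) (A : Fin k → Matrix m n ℂ), (∀ ρ, T ρ = ∑ i, A i * ρ * (A i)ᴴ)

/-- The Hilbert–Schmidt adjoint of a (linear) map on matrices, defined entrywise by
`(T* X)(a,b) = Tr(T(E_{ba}) X)`, so that `Tr(T(ρ)X) = Tr(ρ T*(X))`. -/
def adjointMap {n m : Type} [Fintype n] [DecidableEq n] [Fintype m] [DecidableEq m]
    (T : Matrix n n ℂ → Matrix m m ℂ) (X : Matrix m m ℂ) : Matrix n n ℂ :=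
  Matrix.of fun a b => (T (Matrix.single b a 1) * X).trace

/-- The transpose channel (Petz recovery map)
`T̂_σ(α) = σ^{1/2} T*((Tσ)^{-1/2} α (Tσ)^{-1/2}) σ^{1/2}`,
with inverses and square roots taken on supports. -/
def transposeChannel {n m : Type} [Fintype n] [DecidableEq n] [Fintype m] [DecidableEq m]
    (T : Matrix n n ℂ → Matrix m m ℂ) (σ : Matrix n n ℂ) (α : Matrix m m ℂ) :
    Matrix n n ℂ :=
  matFun Real.sqrt σ *
    adjointMap T
      (matFun (fun x => (Real.sqrt x)⁻¹) (T σ) * α * matFun (fun x => (Real.sqrt x)⁻¹) (T σ)) *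
    matFun Real.sqrt σ

/-- The map `id ⊗ Φ` acting on operators on a bipartite system (first factor a spectator). -/
def idTensor {A B D : Type} (Φ : Matrix B B ℂ → Matrix D D ℂ)
    (X : Matrix (A × B) (A × B) ℂ) : Matrix (A × D) (A × D) ℂ :=
  Matrix.of fun x y => Φ (Matrix.of fun b b' => X (x.1, b) (y.1, b')) x.2 y.2

/-- The operator `ρ_{AL} ⊗ ρ_{RC}` on `H_A ⊗ (H_L ⊗ H_R) ⊗ H_C`, with tensor factors
reordered appropriately. -/
def midTensor {A L R C : Type} (ρAL : Matrix (A × L) (A × L) ℂ)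
    (ρRC : Matrix (R × C) (R × C) ℂ) :
    Matrix (A × (L × R) × C) (A × (L × R) × C) ℂ :=
  Matrix.of fun x y =>
    ρAL (x.1, x.2.1.1) (y.1, y.2.1.1) * ρRC (x.2.1.2, x.2.2) (y.2.1.2, y.2.2)

/-- Conjugation `(1_A ⊗ V ⊗ 1_C) X (1_A ⊗ Vᴴ ⊗ 1_C)` embedding an operator on
`H_A ⊗ H_D ⊗ H_C` into `H_A ⊗ H_B ⊗ H_C` via `V : H_D → H_B`. -/
def sandwich {A B C D : Type} [Fintype D] (V : Matrix B D ℂ)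
    (X : Matrix (A × D × C) (A × D × C) ℂ) : Matrix (A × B × C) (A × B × C) ℂ :=
  Matrix.of fun x y =>
    ∑ d, ∑ d', V x.2.1 d * X (x.1, d, x.2.2) (y.1, d', y.2.2) * star (V y.2.1 d')

/-- The operator `1_J ⊗ W` on `(H_J ⊗ H_K) ⊗ H_E`, where `W` acts on `H_K ⊗ H_E`. -/
def midUnit {J K E : Type} [DecidableEq J] (W : Matrix (K × E) (K × E) ℂ) :
    Matrix ((J × K) × E) ((J × K) × E) ℂ :=
  Matrix.of fun x y =>
    (if x.1.1 = y.1.1 then 1 else 0) * W (x.1.2, x.2) (y.1.2, y.2)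

/-- The Holevo quantity `χ({p(x), ρ_x}) = S(∑ p(x) ρ_x) − ∑ p(x) S(ρ_x)`. -/
def holevo {X n : Type} [Fintype X] [Fintype n] [DecidableEq n]
    (p : X → ℝ) (ρ : X → Matrix n n ℂ) : ℝ :=
  vnEntropy (∑ x, (p x : ℂ) • ρ x) - ∑ x, p x * vnEntropy (ρ x)

/-- Separability of a bipartite density operator: a finite convex combination of tensor
products of density operators. -/
def IsSeparable {A C : Type} [Fintype A] [Fintype C] (ρ : Matrix (A × C) (A × C) ℂ) : Prop :=
  ∃ (k : ℕ) (p : Fin k → ℝ) (σA : Fin k → Matrix A A ℂ) (σC : Fin k → Matrix C C ℂ),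
    (∀ i, 0 ≤ p i) ∧ (∑ i, p i = 1) ∧ (∀ i, IsDensity (σA i)) ∧ (∀ i, IsDensity (σC i)) ∧
    ρ = ∑ i, (p i : ℂ) • (σA i ⊗ₖ σC i)

end SSA

section Helpers
open SSA Polynomial Finset

namespace SSAProof

/-- Rank one matrix `|w⟩⟨w|`. -/
def rankOne {ι : Type} (w : ι → ℂ) : Matrix ι ι ℂ := Matrix.of fun i j => w i * star (w j)

lemma sum_rankOne_apply {ι β : Type} [Fintype β] (q : β → ℝ) (w : β → ι → ℂ) (x y : ι) :
    (∑ b, (q b : ℂ) • rankOne (w b)) x y = ∑ b, (q b : ℂ) * (w b x * star (w b y)) := by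
  simp [rankOne, Matrix.sum_apply]

lemma posSemidef_single_rankOne {ι : Type} [Fintype ι] (q : ℝ) (hq : 0 ≤ q) (w : ι → ℂ) :
    ((q : ℂ) • rankOne w).PosSemidef := by
  have key : (q : ℂ) • rankOne w
      = (Matrix.of fun (_ : Unit) j => ((Real.sqrt q : ℝ) : ℂ) * star (w j))ᴴ
        * (Matrix.of fun (_ : Unit) j => ((Real.sqrt q : ℝ) : ℂ) * star (w j)) := by
    ext i j
    have hsq : ((Real.sqrt q : ℝ) : ℂ) * ((Real.sqrt q : ℝ) : ℂ) = (q : ℂ) := by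
      rw [← Complex.ofReal_mul, Real.mul_self_sqrt hq]
    simp only [Matrix.mul_apply, Matrix.conjTranspose_apply, Matrix.of_apply,
      Finset.univ_unique, Finset.sum_singleton, star_mul', star_star, RCLike.star_def,
      Complex.conj_ofReal, Matrix.smul_apply, rankOne, smul_eq_mul, Complex.conj_conj]
    rw [← hsq]; ring
  rw [key]
  exact Matrix.posSemidef_conjTranspose_mul_self _

lemma posSemidef_sum_rankOne {ι β : Type} [Fintype ι] [Fintype β]
    (q : β → ℝ) (hq : ∀ b, 0 ≤ q b) (w : β → ι → ℂ) :
    (∑ b, (q b : ℂ) • rankOne (w b)).PosSemidef := by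
  classical
  refine Finset.sum_induction _ _ (fun a b ha hb => ha.add hb) Matrix.PosSemidef.zero ?_
  exact fun b _ => posSemidef_single_rankOne (q b) (hq b) (w b)

lemma sum_range_eq {ι β γ : Type} [Fintype ι] [Fintype β] [DecidableEq ι] [AddCommMonoid γ]
    (f : β → ι) (hf : Function.Injective f) (F : ι → γ)
    (hz : ∀ i, (¬ ∃ b, f b = i) → F i = 0) : ∑ i, F i = ∑ b, F (f b) := by
  classical
  rw [← Finset.sum_image (g := f) (f := F) (fun x _ y _ h => hf h)]
  refine (Finset.sum_subset (Finset.subset_univ _) fun x _ hx => hz x ?_).symm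
  intro ⟨b, hb⟩
  exact hx (Finset.mem_image.mpr ⟨b, Finset.mem_univ b, hb⟩)

lemma charpoly_unitary_conj {ι : Type} [Fintype ι] [DecidableEq ι] (V M : Matrix ι ι ℂ)
    (h1 : V * Vᴴ = 1) (h2 : Vᴴ * V = 1) :
    (V * M * Vᴴ).charpoly = M.charpoly := by
  have hmap1 : V.map (C : ℂ →+* ℂ[X]) * Vᴴ.map (C : ℂ →+* ℂ[X]) = 1 := by
    rw [← Matrix.map_mul, h1, Matrix.map_one _ (map_zero _) (map_one _)]
  have hmap2 : Vᴴ.map (C : ℂ →+* ℂ[X]) * V.map (C : ℂ →+* ℂ[X]) = 1 := by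
    rw [← Matrix.map_mul, h2, Matrix.map_one _ (map_zero _) (map_one _)]
  have hcomm : V.map (C : ℂ →+* ℂ[X]) * Matrix.scalar ι (X : ℂ[X]) * Vᴴ.map (C : ℂ →+* ℂ[X])
      = Matrix.scalar ι (X : ℂ[X]) := by
    rw [← (Matrix.scalar_commute (X : ℂ[X]) (fun r => Commute.all _ _)
      (V.map (C : ℂ →+* ℂ[X]))).eq, mul_assoc, hmap1, mul_one]
  have hchar : Matrix.charmatrix (V * M * Vᴴ)
      = V.map (C : ℂ →+* ℂ[X]) * Matrix.charmatrix M * Vᴴ.map (C : ℂ →+* ℂ[X]) := by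
    unfold Matrix.charmatrix
    simp only [RingHom.mapMatrix_apply]
    rw [Matrix.map_mul, Matrix.map_mul, Matrix.mul_sub, Matrix.sub_mul]
    rw [show V.map (C : ℂ →+* ℂ[X]) * Matrix.scalar ι (X : ℂ[X]) * Vᴴ.map (C : ℂ →+* ℂ[X])
      = Matrix.scalar ι (X : ℂ[X]) from hcomm]
  have hdet : (V.map (C : ℂ →+* ℂ[X])).det * (Vᴴ.map (C : ℂ →+* ℂ[X])).det = 1 := by
    rw [← Matrix.det_mul, hmap1, Matrix.det_one]
  unfold Matrix.charpoly
  rw [hchar, Matrix.det_mul, Matrix.det_mul, mul_right_comm, hdet, one_mul]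

lemma charpoly_diagonal {ι : Type} [Fintype ι] [DecidableEq ι] (v : ι → ℂ) :
    (Matrix.diagonal v).charpoly = ∏ i, (X - C (v i)) := by
  unfold Matrix.charpoly
  have h : Matrix.charmatrix (Matrix.diagonal v) = Matrix.diagonal fun i => (X - C (v i)) := by
    ext i j
    by_cases h : i = j
    · subst h; rw [Matrix.charmatrix_apply_eq, Matrix.diagonal_apply_eq, Matrix.diagonal_apply_eq]
    · rw [Matrix.charmatrix_apply_ne _ _ _ h, Matrix.diagonal_apply_ne _ h,
        Matrix.diagonal_apply_ne _ h, map_zero, neg_zero]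
  rw [h, Matrix.det_diagonal]

lemma roots_prod_X_sub_C' {ι : Type} [Fintype ι] (a : ι → ℂ) :
    (∏ i, (X - C (a i))).roots = Finset.univ.val.map a := by
  rw [Finset.prod_eq_multiset_prod]
  have : Multiset.map (fun i => X - C (a i)) Finset.univ.val
      = (Finset.univ.val.map a).map (fun z => X - C z) := by
    rw [Multiset.map_map]; rfl
  rw [this, Polynomial.roots_multiset_prod_X_sub_C]

/-- Core lemma: the entropy of `∑ q_b |w_b⟩⟨w_b|` for orthonormal `w_b` with `β` embedding
into the index type equals the Shannon entropy of `q`. -/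
lemma vnEntropy_sum_rankOne {ι β : Type} [Fintype ι] [DecidableEq ι] [Fintype β] [DecidableEq β]
    (f : β → ι) (hf : Function.Injective f)
    (q : β → ℝ) (hq : ∀ b, 0 ≤ q b) (w : β → ι → ℂ)
    (horth : ∀ b b', (∑ i, star (w b i) * w b' i) = if b = b' then 1 else 0) :
    vnEntropy (∑ b, (q b : ℂ) • rankOne (w b)) = -∑ b, q b * Real.logb 2 (q b) := by
  classical
  set M := ∑ b, (q b : ℂ) • rankOne (w b) with hMdef
  have hM : M.PosSemidef := posSemidef_sum_rankOne q hq w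
  have hH : M.IsHermitian := hM.1
  -- orthonormal family in EuclideanSpace
  set g : ι → EuclideanSpace ℂ ι :=
    fun i => if h : ∃ b, f b = i then (WithLp.equiv 2 (ι → ℂ)).symm (w h.choose) else 0 with hgdef
  have hg : ∀ b, g (f b) = (WithLp.equiv 2 (ι → ℂ)).symm (w b) := by
    intro b
    have hex : ∃ b', f b' = f b := ⟨b, rfl⟩
    simp only [hgdef, dif_pos hex]
    exact congrArg _ (congrArg w (hf hex.choose_spec))
  have horth' : Orthonormal ℂ ((Set.range f).restrict g) := by
    rw [orthonormal_iff_ite]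
    rintro ⟨i, bi, rfl⟩ ⟨j, bj, rfl⟩
    have : ((Set.range f).restrict g) ⟨f bi, ⟨bi, rfl⟩⟩ = (WithLp.equiv 2 (ι → ℂ)).symm (w bi) :=
      hg bi
    change inner ℂ (g (f bi)) (g (f bj)) = _
    rw [hg bi, hg bj, PiLp.inner_apply]
    simp only [WithLp.equiv_symm_apply, PiLp.toLp_apply, RCLike.inner_apply, RCLike.star_def]
    rw [show (∑ x, w bj x * (starRingEnd ℂ) (w bi x)) = ∑ x, star (w bi x) * w bj x from
        Finset.sum_congr rfl fun _ _ => mul_comm _ _,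
      horth bi bj]
    congr 1
    simp only [Subtype.mk_eq_mk, eq_iff_iff]
    exact ⟨fun h => Subtype.ext (congrArg f h), fun h => hf (congrArg Subtype.val h)⟩
  obtain ⟨ob, hob⟩ := horth'.exists_orthonormalBasis_extension_of_card_eq
    (by simp [finrank_euclideanSpace]) 
  set V : Matrix ι ι ℂ := Matrix.of fun x i => ob i x with hVdef
  have hVcol : ∀ b, ∀ x, V x (f b) = w b x := by
    intro b x
    have h1 : ob (f b) = g (f b) := hob (f b) ⟨b, rfl⟩
    simp only [hVdef, Matrix.of_apply, h1, hg b, WithLp.equiv_symm_apply, PiLp.toLp_apply]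
  have hVhV : Vᴴ * V = 1 := by
    ext i j
    have h2 := (orthonormal_iff_ite.mp ob.orthonormal) i j
    rw [PiLp.inner_apply] at h2
    simp only [RCLike.inner_apply, RCLike.star_def] at h2
    simp only [Matrix.mul_apply, Matrix.conjTranspose_apply, hVdef, Matrix.of_apply,
      Matrix.one_apply]
    exact (Finset.sum_congr rfl fun _ _ => mul_comm _ _).trans h2
  have hVVh : V * Vᴴ = 1 := mul_eq_one_comm.mp hVhV
  set d : ι → ℝ := fun i => if h : ∃ b, f b = i then q h.choose else 0 with hddef
  have hd : ∀ b, d (f b) = q b := by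
    intro b
    have hex : ∃ b', f b' = f b := ⟨b, rfl⟩
    simp only [hddef, dif_pos hex]
    exact congrArg q (hf hex.choose_spec)
  have hdz : ∀ i, (¬ ∃ b, f b = i) → d i = 0 := fun i h => by simp only [hddef, dif_neg h]
  have hMd : M = V * Matrix.diagonal (fun i => (d i : ℂ)) * Vᴴ := by
    ext x y
    rw [hMdef, sum_rankOne_apply]
    have hrhs : (V * Matrix.diagonal (fun i => (d i : ℂ)) * Vᴴ) x y
        = ∑ i, (d i : ℂ) * (V x i * star (V y i)) := by
      rw [Matrix.mul_apply]
      refine Finset.sum_congr rfl fun i _ => ?_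
      rw [Matrix.mul_diagonal, Matrix.conjTranspose_apply]
      ring
    rw [hrhs, sum_range_eq f hf _ (fun i hi => by rw [hdz i hi]; simp)]
    refine Finset.sum_congr rfl fun b _ => ?_
    rw [hd b, hVcol b x, hVcol b y]
  -- charpoly comparison
  set U : Matrix ι ι ℂ := (hH.eigenvectorUnitary : Matrix ι ι ℂ) with hUdef
  have hU1 : U * Uᴴ = 1 := Matrix.mem_unitaryGroup_iff.mp (hH.eigenvectorUnitary).2
  have hU2 : Uᴴ * U = 1 := Matrix.mem_unitaryGroup_iff'.mp (hH.eigenvectorUnitary).2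
  have hc1 : M.charpoly = ∏ i, (X - C ((hH.eigenvalues i : ℝ) : ℂ)) := by
    have hspec : M = U * Matrix.diagonal (fun i => ((hH.eigenvalues i : ℝ) : ℂ)) * Uᴴ := by
      convert hH.spectral_theorem using 2
      rw [Unitary.conjStarAlgAut_apply]; rfl
    conv_lhs => rw [hspec]
    rw [charpoly_unitary_conj _ _ hU1 hU2, charpoly_diagonal]
  have hc2 : M.charpoly = ∏ i, (X - C ((d i : ℝ) : ℂ)) := by
    conv_lhs => rw [hMd]
    rw [charpoly_unitary_conj _ _ hVVh hVhV, charpoly_diagonal]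
  have hrootsC : Finset.univ.val.map (fun i => ((hH.eigenvalues i : ℝ) : ℂ))
      = Finset.univ.val.map (fun i => ((d i : ℝ) : ℂ)) := by
    have := congrArg Polynomial.roots (hc1.symm.trans hc2)
    rwa [roots_prod_X_sub_C', roots_prod_X_sub_C'] at this
  have hroots : Finset.univ.val.map hH.eigenvalues = Finset.univ.val.map d := by
    apply Multiset.map_injective (f := (Complex.ofReal : ℝ → ℂ)) Complex.ofReal_injective
    rw [Multiset.map_map, Multiset.map_map]
    exact hrootsC
  have hsum : ∀ e : ι → ℝ, (∑ i, e i * Real.logb 2 (e i))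
      = ((Finset.univ.val.map e).map (fun t => t * Real.logb 2 t)).sum := by
    intro e
    rw [Finset.sum_eq_multiset_sum, Multiset.map_map]
    rfl
  have hfinal : (∑ i, hH.eigenvalues i * Real.logb 2 (hH.eigenvalues i))
      = ∑ b, q b * Real.logb 2 (q b) := by
    rw [hsum hH.eigenvalues, hroots, ← hsum d,
      sum_range_eq f hf _ (fun i hi => by rw [hdz i hi]; simp)]
    exact Finset.sum_congr rfl fun b _ => by rw [hd b]
  unfold vnEntropy
  rw [dif_pos hH, hfinal]

lemma rclike_eq (x : ℝ) : (RCLike.ofReal x : ℂ) = Complex.ofReal x := rfl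

lemma density_spectral {n : Type} [Fintype n] [DecidableEq n] {σ : Matrix n n ℂ}
    (hσ : IsDensity σ) :
    ∃ (lam : n → ℝ) (U : n → n → ℂ),
      (∀ a, 0 ≤ lam a) ∧ (∑ a, lam a = 1) ∧
      (∀ a, ∑ x, star (U a x) * U a x = 1) ∧
      (∀ x y, σ x y = ∑ a, (lam a : ℂ) * (U a x * star (U a y))) := by
  have hH : σ.IsHermitian := hσ.1.1
  have hU2 : (star (hH.eigenvectorUnitary : Matrix n n ℂ)) * (hH.eigenvectorUnitary : Matrix n n ℂ)
      = 1 := Matrix.mem_unitaryGroup_iff'.mp (hH.eigenvectorUnitary).2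
  refine ⟨hH.eigenvalues, fun a x => (hH.eigenvectorUnitary : Matrix n n ℂ) x a,
    fun a => hσ.1.eigenvalues_nonneg a, ?_, ?_, ?_⟩
  · have htrace : σ.trace = ∑ a, ((hH.eigenvalues a : ℝ) : ℂ) := by
      conv_lhs => rw [hH.spectral_theorem, Unitary.conjStarAlgAut_apply]
      rw [Matrix.trace_mul_comm, ← mul_assoc, hU2, one_mul, Matrix.trace_diagonal]
      simp [Function.comp, rclike_eq]
    rw [hσ.2] at htrace
    exact_mod_cast htrace.symm
  · intro a
    have h := congrFun (congrFun hU2 a) a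
    rw [Matrix.mul_apply] at h
    simpa [Matrix.star_apply, Matrix.one_apply_eq] using h
  · intro x y
    conv_lhs => rw [hH.spectral_theorem, Unitary.conjStarAlgAut_apply]
    rw [Matrix.mul_apply]
    refine Finset.sum_congr rfl fun a _ => ?_
    rw [Matrix.mul_diagonal, Matrix.star_apply]
    simp only [Function.comp, rclike_eq]
    ring

lemma build {A C B : Type} [Fintype A] [DecidableEq A] [Fintype C] [DecidableEq C]
    [Fintype B] [DecidableEq B] (a0 : A) (c0 : C)
    (q : B → ℝ) (hq0 : ∀ b, 0 ≤ q b) (hq1 : ∑ b, q b = 1)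
    (u : B → A → ℂ) (hu : ∀ b, ∑ a, star (u b a) * u b a = 1)
    (v : B → C → ℂ) (hv : ∀ b, ∑ c, star (v b c) * v b c = 1) :
    ∃ ρ : Matrix (A × B × C) (A × B × C) ℂ,
      IsDensity ρ ∧
      (∀ x y : A × C, rAC ρ x y
        = ∑ b, (q b : ℂ) * ((u b x.1 * star (u b y.1)) * (v b x.2 * star (v b y.2)))) ∧
      vnEntropy (rAB ρ) + vnEntropy (rBC ρ) - vnEntropy ρ - vnEntropy (rB ρ) = 0 := by
  classical
  set W : B → (A × B × C) → ℂ :=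
    fun b x => (if x.2.1 = b then 1 else 0) * (u b x.1 * v b x.2.2) with hWdef
  set ρ := ∑ b, (q b : ℂ) • rankOne (W b) with hρdef
  have hu' : ∀ b, ∑ a, u b a * star (u b a) = 1 := fun b => by
    rw [← hu b]; exact Finset.sum_congr rfl fun a _ => mul_comm _ _
  have hv' : ∀ b, ∑ c, v b c * star (v b c) = 1 := fun b => by
    rw [← hv b]; exact Finset.sum_congr rfl fun c _ => mul_comm _ _
  have happ : ∀ x y, ρ x y = ∑ b, (q b : ℂ) * (W b x * star (W b y)) := by
    intro x y; rw [hρdef]; exact sum_rankOne_apply q W x y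
  -- reduced states
  have hAB : rAB ρ
      = ∑ b, (q b : ℂ) • rankOne (fun x : A × B => (if x.2 = b then 1 else 0) * u b x.1) := by
    ext x y
    rw [sum_rankOne_apply]
    show (∑ c, ρ (x.1, x.2, c) (y.1, y.2, c)) = _
    rw [Finset.sum_congr rfl (fun c _ => happ _ _), Finset.sum_comm]
    refine Finset.sum_congr rfl fun b _ => ?_
    have hterm : ∀ c, (q b : ℂ) * (W b (x.1, x.2, c) * star (W b (y.1, y.2, c)))
        = ((q b : ℂ) * (((if x.2 = b then 1 else 0) * u b x.1)
            * star ((if y.2 = b then 1 else 0) * u b y.1))) * (v b c * star (v b c)) := by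
      intro c
      simp only [hWdef]
      split_ifs <;> simp only [star_mul', star_one, star_zero, one_mul, mul_one, zero_mul, mul_zero] <;> ring
    rw [Finset.sum_congr rfl fun c _ => hterm c, ← Finset.mul_sum, hv' b, mul_one]
  have hBC : rBC ρ
      = ∑ b, (q b : ℂ) • rankOne (fun x : B × C => (if x.1 = b then 1 else 0) * v b x.2) := by
    ext x y
    rw [sum_rankOne_apply]
    show (∑ a, ρ (a, x.1, x.2) (a, y.1, y.2)) = _
    rw [Finset.sum_congr rfl (fun a _ => happ _ _), Finset.sum_comm]
    refine Finset.sum_congr rfl fun b _ => ?_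
    have hterm : ∀ a, (q b : ℂ) * (W b (a, x.1, x.2) * star (W b (a, y.1, y.2)))
        = ((q b : ℂ) * (((if x.1 = b then 1 else 0) * v b x.2)
            * star ((if y.1 = b then 1 else 0) * v b y.2))) * (u b a * star (u b a)) := by
      intro a
      simp only [hWdef]
      split_ifs <;> simp only [star_mul', star_one, star_zero, one_mul, mul_one, zero_mul, mul_zero] <;> ring
    rw [Finset.sum_congr rfl fun a _ => hterm a, ← Finset.mul_sum, hu' b, mul_one]
  have hBm : rB ρ = ∑ b, (q b : ℂ) • rankOne (fun b' : B => (if b' = b then (1 : ℂ) else 0)) := by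
    ext b1 b2
    rw [sum_rankOne_apply]
    show (∑ a, ∑ c, ρ (a, b1, c) (a, b2, c)) = _
    rw [Finset.sum_congr rfl (fun a _ => Finset.sum_congr rfl fun c _ => happ _ _)]
    rw [Finset.sum_congr rfl (fun a _ => Finset.sum_comm), Finset.sum_comm]
    refine Finset.sum_congr rfl fun b _ => ?_
    have hterm : ∀ a c, (q b : ℂ) * (W b (a, b1, c) * star (W b (a, b2, c)))
        = (((q b : ℂ) * ((if b1 = b then 1 else 0) * star (if b2 = b then (1 : ℂ) else 0)))
            * (u b a * star (u b a))) * (v b c * star (v b c)) := by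
      intro a c
      simp only [hWdef]
      split_ifs <;> simp only [star_mul', star_one, star_zero, one_mul, mul_one, zero_mul, mul_zero] <;> ring
    rw [Finset.sum_congr rfl (fun a _ => Finset.sum_congr rfl fun c _ => hterm a c),
      ← Finset.sum_mul_sum, ← Finset.mul_sum, hu' b, hv' b, mul_one, mul_one]
  have hACf : ∀ x y : A × C, rAC ρ x y
      = ∑ b, (q b : ℂ) * ((u b x.1 * star (u b y.1)) * (v b x.2 * star (v b y.2))) := by
    intro x y
    show (∑ b', ρ (x.1, b', x.2) (y.1, b', y.2)) = _
    rw [Finset.sum_congr rfl (fun b' _ => happ _ _), Finset.sum_comm]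
    refine Finset.sum_congr rfl fun b _ => ?_
    have hterm : ∀ b', (q b : ℂ) * (W b (x.1, b', x.2) * star (W b (y.1, b', y.2)))
        = if b' = b then
            (q b : ℂ) * ((u b x.1 * star (u b y.1)) * (v b x.2 * star (v b y.2))) else 0 := by
      intro b'
      simp only [hWdef]
      split_ifs <;> simp only [star_mul', star_one, star_zero, one_mul, mul_one, zero_mul, mul_zero] <;> ring
    rw [Finset.sum_congr rfl fun b' _ => hterm b', Finset.sum_ite_eq' Finset.univ b,
      if_pos (Finset.mem_univ b)]
  -- orthonormality of the families
  have hWorth : ∀ b b', (∑ x : A × B × C, star (W b x) * W b' x) = if b = b' then 1 else 0 := by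
    intro b b'
    by_cases hbb : b = b'
    · subst hbb
      rw [if_pos rfl]
      have hterm : ∀ x : A × B × C, star (W b x) * W b x
          = ((if x.2.1 = b then 1 else 0) * (star (u b x.1) * u b x.1))
              * (star (v b x.2.2) * v b x.2.2) := by
        intro x
        simp only [hWdef]
        split_ifs <;> simp only [star_mul', star_one, star_zero, one_mul, mul_one, zero_mul, mul_zero] <;> ring
      rw [Finset.sum_congr rfl fun x _ => hterm x, Fintype.sum_prod_type]
      dsimp only
      have h1 : ∀ a, (∑ y : B × C, ((if y.1 = b then (1 : ℂ) else 0) * (star (u b a) * u b a))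
          * (star (v b y.2) * v b y.2)) = star (u b a) * u b a := by
        intro a
        rw [Fintype.sum_prod_type]
        dsimp only
        rw [← Finset.sum_mul_sum Finset.univ Finset.univ
          (fun x : B => (if x = b then (1 : ℂ) else 0) * (star (u b a) * u b a))
          (fun c => star (v b c) * v b c), hv b, mul_one]
        simp only [ite_mul, one_mul, zero_mul, Finset.sum_ite_eq', Finset.mem_univ, if_true]
      rw [Finset.sum_congr rfl fun a _ => h1 a, hu b]
    · rw [if_neg hbb]
      refine Finset.sum_eq_zero fun x _ => ?_
      simp only [hWdef]
      split_ifs with h1 h2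
      · exact absurd (h1.symm.trans h2) hbb
      all_goals simp
  have hABorth : ∀ b b', (∑ x : A × B,
      star ((if x.2 = b then (1 : ℂ) else 0) * u b x.1)
        * ((if x.2 = b' then 1 else 0) * u b' x.1)) = if b = b' then 1 else 0 := by
    intro b b'
    by_cases hbb : b = b'
    · subst hbb
      rw [if_pos rfl]
      have hterm : ∀ x : A × B, star ((if x.2 = b then (1 : ℂ) else 0) * u b x.1)
          * ((if x.2 = b then 1 else 0) * u b x.1)
          = (if x.2 = b then 1 else 0) * (star (u b x.1) * u b x.1) := by
        intro x
        split_ifs <;> simp only [star_mul', star_one, star_zero, one_mul, mul_one, zero_mul, mul_zero] <;> ring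
      rw [Finset.sum_congr rfl fun x _ => hterm x, Fintype.sum_prod_type]
      dsimp only
      have h1 : ∀ a, (∑ b'' : B, (if b'' = b then (1 : ℂ) else 0) * (star (u b a) * u b a))
          = star (u b a) * u b a := by
        intro a
        simp only [ite_mul, one_mul, zero_mul, Finset.sum_ite_eq', Finset.mem_univ, if_true]
      rw [Finset.sum_congr rfl fun a _ => h1 a, hu b]
    · rw [if_neg hbb]
      refine Finset.sum_eq_zero fun x _ => ?_
      split_ifs with h1 h2
      · exact absurd (h1.symm.trans h2) hbb
      all_goals simp
  have hBCorth : ∀ b b', (∑ x : B × C,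
      star ((if x.1 = b then (1 : ℂ) else 0) * v b x.2)
        * ((if x.1 = b' then 1 else 0) * v b' x.2)) = if b = b' then 1 else 0 := by
    intro b b'
    by_cases hbb : b = b'
    · subst hbb
      rw [if_pos rfl]
      have hterm : ∀ x : B × C, star ((if x.1 = b then (1 : ℂ) else 0) * v b x.2)
          * ((if x.1 = b then 1 else 0) * v b x.2)
          = (if x.1 = b then 1 else 0) * (star (v b x.2) * v b x.2) := by
        intro x
        split_ifs <;> simp only [star_mul', star_one, star_zero, one_mul, mul_one, zero_mul, mul_zero] <;> ring
      rw [Finset.sum_congr rfl fun x _ => hterm x, Fintype.sum_prod_type]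
      dsimp only
      have h1 : (∑ b'' : B, ∑ c, (if b'' = b then (1 : ℂ) else 0) * (star (v b c) * v b c))
          = ∑ c, star (v b c) * v b c := by
        rw [Finset.sum_comm]
        simp only [ite_mul, one_mul, zero_mul, Finset.sum_ite_eq', Finset.mem_univ, if_true]
      rw [h1, hv b]
    · rw [if_neg hbb]
      refine Finset.sum_eq_zero fun x _ => ?_
      split_ifs with h1 h2
      · exact absurd (h1.symm.trans h2) hbb
      all_goals simp
  have hBorth : ∀ b b', (∑ b'' : B,
      star (if b'' = b then (1 : ℂ) else 0) * (if b'' = b' then 1 else 0))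
      = if b = b' then 1 else 0 := by
    intro b b'
    simp only [apply_ite (star : ℂ → ℂ), star_one, star_zero, ite_mul, one_mul, zero_mul,
      Finset.sum_ite_eq', Finset.mem_univ, if_true]
  -- trace
  have hWnorm : ∀ b, (∑ x, W b x * star (W b x)) = 1 := by
    intro b
    rw [Finset.sum_congr rfl fun x _ => mul_comm (W b x) (star (W b x))]
    have := hWorth b b
    rwa [if_pos rfl] at this
  have htrace : ρ.trace = 1 := by
    rw [hρdef, Matrix.trace_sum]
    have h1 : ∀ b, ((q b : ℂ) • rankOne (W b)).trace = (q b : ℂ) := by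
      intro b
      rw [Matrix.trace_smul]
      have h2 : (rankOne (W b)).trace = 1 := by
        rw [Matrix.trace]
        have : ∀ x, (rankOne (W b)).diag x = W b x * star (W b x) := fun x => rfl
        rw [Finset.sum_congr rfl fun x _ => this x, hWnorm b]
      rw [h2, smul_eq_mul, mul_one]
    rw [Finset.sum_congr rfl fun b _ => h1 b, ← Complex.ofReal_sum, hq1, Complex.ofReal_one]
  -- entropies
  have hent1 : vnEntropy ρ = -∑ b, q b * Real.logb 2 (q b) := by
    rw [hρdef]
    exact vnEntropy_sum_rankOne (fun b => (a0, b, c0))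
      (fun b b' h => by simpa using congrArg (fun t : A × B × C => t.2.1) h) q hq0 W hWorth
  have hent2 : vnEntropy (rAB ρ) = -∑ b, q b * Real.logb 2 (q b) := by
    rw [hAB]
    exact vnEntropy_sum_rankOne (fun b => (a0, b))
      (fun b b' h => by simpa using congrArg (fun t : A × B => t.2) h) q hq0 _ hABorth
  have hent3 : vnEntropy (rBC ρ) = -∑ b, q b * Real.logb 2 (q b) := by
    rw [hBC]
    exact vnEntropy_sum_rankOne (fun b => (b, c0))
      (fun b b' h => by simpa using congrArg (fun t : B × C => t.1) h) q hq0 _ hBCorth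
  have hent4 : vnEntropy (rB ρ) = -∑ b, q b * Real.logb 2 (q b) := by
    rw [hBm]
    exact vnEntropy_sum_rankOne (fun b => b) (fun b b' h => h) q hq0 _ hBorth
  exact ⟨ρ, ⟨posSemidef_sum_rankOne q hq0 W, htrace⟩, hACf,
    by rw [hent1, hent2, hent3, hent4]; ring⟩

end SSAProof

end Helpers

open SSA in
/-- Every separable density operator `ρ_AC` admits an extension
`ρ_ABC` (for some finite-dimensional `H_B`) with `Tr_B(ρ_ABC) = ρ_AC` and
`I(A:C|B) = S(ρ_AB) + S(ρ_BC) − S(ρ_ABC) − S(ρ_B) = 0`. -/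
theorem statement11 {A C : Type} [Fintype A] [DecidableEq A] [Fintype C] [DecidableEq C]
    (ρAC : Matrix (A × C) (A × C) ℂ) (hρ : IsDensity ρAC) (hsep : IsSeparable ρAC) :
    ∃ (nB : ℕ) (ρ : Matrix (A × Fin nB × C) (A × Fin nB × C) ℂ),
      IsDensity ρ ∧ rAC ρ = ρAC ∧
      vnEntropy (rAB ρ) + vnEntropy (rBC ρ) - vnEntropy ρ - vnEntropy (rB ρ) = 0 := by
  classical
  obtain ⟨k, p, σA, σC, hp0, hp1, hdA, hdC, hrep⟩ := hsep
  have hne : Nonempty (A × C) := by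
    by_contra h
    rw [not_nonempty_iff] at h
    have h1 := hρ.2
    simp [Matrix.trace, Finset.univ_eq_empty] at h1
  obtain ⟨⟨a0, c0⟩⟩ := hne
  choose lamA UA hA0 hA1 hA2 hA3 using fun i => SSAProof.density_spectral (hdA i)
  choose lamC UC hC0 hC1 hC2 hC3 using fun i => SSAProof.density_spectral (hdC i)
  set e : Fin (Fintype.card (Fin k × A × C)) ≃ (Fin k × A × C) :=
    (Fintype.equivFin (Fin k × A × C)).symm with hedef
  have hq0 : ∀ b, 0 ≤ p (e b).1 * (lamA (e b).1 (e b).2.1 * lamC (e b).1 (e b).2.2) :=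
    fun b => mul_nonneg (hp0 _) (mul_nonneg (hA0 _ _) (hC0 _ _))
  have hone : ∀ i : Fin k, (∑ y : A × C, p i * (lamA i y.1 * lamC i y.2)) = p i := by
    intro i
    rw [← Finset.mul_sum, Fintype.sum_prod_type]
    dsimp only
    rw [← Finset.sum_mul_sum, hA1 i, hC1 i, one_mul, mul_one]
  have hq1 : (∑ b, p (e b).1 * (lamA (e b).1 (e b).2.1 * lamC (e b).1 (e b).2.2)) = 1 := by
    refine Eq.trans (Fintype.sum_equiv e _
      (fun t : Fin k × A × C => p t.1 * (lamA t.1 t.2.1 * lamC t.1 t.2.2)) (fun b => rfl)) ?_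
    rw [Fintype.sum_prod_type]
    dsimp only
    rw [Finset.sum_congr rfl fun i _ => hone i]
    exact hp1
  obtain ⟨ρB, hρd, hρAC, hρent⟩ := SSAProof.build a0 c0
    (fun b => p (e b).1 * (lamA (e b).1 (e b).2.1 * lamC (e b).1 (e b).2.2)) hq0 hq1
    (fun b => UA (e b).1 (e b).2.1) (fun b => hA2 (e b).1 (e b).2.1)
    (fun b => UC (e b).1 (e b).2.2) (fun b => hC2 (e b).1 (e b).2.2)
  refine ⟨Fintype.card (Fin k × A × C), ρB, hρd, ?_, hρent⟩
  ext x y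
  rw [hρAC x y, hrep, Matrix.sum_apply]
  refine Eq.trans (Fintype.sum_equiv e _
    (fun t : Fin k × A × C => ((p t.1 * (lamA t.1 t.2.1 * lamC t.1 t.2.2) : ℝ) : ℂ)
      * ((UA t.1 t.2.1 x.1 * star (UA t.1 t.2.1 y.1))
        * (UC t.1 t.2.2 x.2 * star (UC t.1 t.2.2 y.2)))) (fun b => rfl)) ?_
  rw [Fintype.sum_prod_type]
  refine Finset.sum_congr rfl fun i _ => ?_
  dsimp only
  rw [Matrix.smul_apply, Matrix.kroneckerMap_apply, hA3 i x.1 y.1, hC3 i x.2 y.2, smul_eq_mul,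
    Finset.sum_mul_sum, Finset.mul_sum, Fintype.sum_prod_type]
  refine Finset.sum_congr rfl fun a _ => ?_
  rw [Finset.mul_sum]
  refine Finset.sum_congr rfl fun c _ => ?_
  dsimp only
  push_cast
  ring
end
end

section
/- Let F : B(H) → B(H) be a quantum operation on a finite-dimensional Hilbert space H admitting a faithful (full-rank) invariant density operator, and let F* be its Hilbert–Schmidt adjoint, with Kraus form F*(X) = Σ_i B_i* X B_i. Then the fixed-point set 𝒜_F = {X ∈ B(H) : F*(X) = X} is a *-subalgebra of B(H) and equals the commutant {B_i, B_i*}' = {X : XB_i = B_iX and XB_i* = B_i*X for all i}. -/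
open Matrix
open scoped Kronecker ComplexOrder

noncomputable section

open Matrix in
open scoped ComplexOrder in
lemma SSA.trace_mul_conjTranspose_self_nonneg' {n : Type} [Fintype n] (A : Matrix n n ℂ) :
    0 ≤ (A * Aᴴ).trace := by
  rw [Matrix.trace]
  refine Finset.sum_nonneg fun i _ => ?_
  rw [Matrix.diag_apply, Matrix.mul_apply]
  exact Finset.sum_nonneg fun j _ => by
    rw [Matrix.conjTranspose_apply]; exact mul_star_self_nonneg _

open Matrix in
open scoped ComplexOrder in
lemma SSA.eq_zero_of_trace_mul_conjTranspose_self' {n : Type} [Fintype n] {A : Matrix n n ℂ}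
    (h : (A * Aᴴ).trace = 0) : A = 0 := by
  rw [Matrix.trace] at h
  have h1 := (Finset.sum_eq_zero_iff_of_nonneg (fun i _ => by
    rw [Matrix.diag_apply, Matrix.mul_apply]
    exact Finset.sum_nonneg fun j _ => by
      rw [Matrix.conjTranspose_apply]; exact mul_star_self_nonneg _)).mp h
  ext i j
  have h2 := h1 i (Finset.mem_univ i)
  rw [Matrix.diag_apply, Matrix.mul_apply] at h2
  have h3 := (Finset.sum_eq_zero_iff_of_nonneg (fun j _ => by
    rw [Matrix.conjTranspose_apply]; exact mul_star_self_nonneg _)).mp h2 j (Finset.mem_univ j)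
  rw [Matrix.conjTranspose_apply] at h3
  rcases mul_eq_zero.mp h3 with h | h
  · simpa using h
  · simpa using star_eq_zero.mp h

open Matrix in
open scoped ComplexOrder in
open scoped MatrixOrder in
lemma SSA.comm_of_fixed' {H : Type} [Fintype H] [DecidableEq H] {k : ℕ} {B : Fin k → Matrix H H ℂ}
    (htp : ∑ i, (B i)ᴴ * B i = 1) {σ : Matrix H H ℂ} (hσ : σ.PosDef)
    (hinv : ∑ i, B i * σ * (B i)ᴴ = σ) {X : Matrix H H ℂ}
    (hX : ∑ i, (B i)ᴴ * X * B i = X) (hXc : ∑ i, (B i)ᴴ * Xᴴ * B i = Xᴴ) :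
    ∀ j, X * B j = B j * X := by
  set S := CFC.sqrt σ with hSdef
  have hSherm : Sᴴ = S := (Matrix.nonneg_iff_posSemidef.mp (CFC.sqrt_nonneg σ)).isHermitian
  have hSS : S * S = σ := CFC.sqrt_mul_sqrt_self σ (Matrix.nonneg_iff_posSemidef.mpr hσ.posSemidef)
  have hSdet : IsUnit S.det := by
    have hd : S.det * S.det = σ.det := by rw [← det_mul, hSS]
    have hσdet : σ.det ≠ 0 := hσ.det_pos.ne'
    refine isUnit_iff_ne_zero.mpr fun h => hσdet ?_
    rw [← hd, h, mul_zero]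
  have h1 : ∑ i, (X * B i * σ * (B i)ᴴ * Xᴴ).trace = (X * σ * Xᴴ).trace := by
    rw [← trace_sum]
    congr 1
    rw [show X * σ * Xᴴ = X * (∑ i, B i * σ * (B i)ᴴ) * Xᴴ by rw [hinv],
      Finset.mul_sum, Finset.sum_mul]
    exact Finset.sum_congr rfl fun i _ => by simp only [mul_assoc]
  have h2 : ∑ i, (X * B i * σ * Xᴴ * (B i)ᴴ).trace = (X * σ * Xᴴ).trace := by
    have e : ∀ i, (X * B i * σ * Xᴴ * (B i)ᴴ).trace = ((B i)ᴴ * X * B i * (σ * Xᴴ)).trace := by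
      intro i
      rw [Matrix.trace_mul_comm]
      congr 1
      simp only [mul_assoc]
    simp only [e]
    rw [← trace_sum, ← Finset.sum_mul, hX, ← mul_assoc]
  have h3 : ∑ i, (B i * X * σ * (B i)ᴴ * Xᴴ).trace = (X * σ * Xᴴ).trace := by
    have e : ∀ i, (B i * X * σ * (B i)ᴴ * Xᴴ).trace = (X * σ * ((B i)ᴴ * Xᴴ * B i)).trace := by
      intro i
      rw [show B i * X * σ * (B i)ᴴ * Xᴴ = B i * (X * σ * ((B i)ᴴ * Xᴴ)) by
        simp only [mul_assoc], Matrix.trace_mul_comm]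
      congr 1
      simp only [mul_assoc]
    simp only [e]
    rw [← trace_sum, ← Finset.mul_sum, hXc]
  have h4 : ∑ i, (B i * X * σ * Xᴴ * (B i)ᴴ).trace = (X * σ * Xᴴ).trace := by
    have e : ∀ i, (B i * X * σ * Xᴴ * (B i)ᴴ).trace = ((B i)ᴴ * B i * (X * σ * Xᴴ)).trace := by
      intro i
      rw [Matrix.trace_mul_comm]
      congr 1
      simp only [mul_assoc]
    simp only [e]
    rw [← trace_sum, ← Finset.sum_mul, htp, one_mul]
  have expand : ∀ i, (X * B i - B i * X) * σ * (X * B i - B i * X)ᴴ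
      = X * B i * σ * (B i)ᴴ * Xᴴ - X * B i * σ * Xᴴ * (B i)ᴴ
        - (B i * X * σ * (B i)ᴴ * Xᴴ - B i * X * σ * Xᴴ * (B i)ᴴ) := by
    intro i
    simp only [conjTranspose_sub, conjTranspose_mul]
    noncomm_ring
  have key : ∑ i, ((X * B i - B i * X) * σ * (X * B i - B i * X)ᴴ).trace = 0 := by
    simp only [expand, trace_sub]
    rw [Finset.sum_sub_distrib, Finset.sum_sub_distrib, Finset.sum_sub_distrib, h1, h2, h3, h4]
    ring
  have hterm : ∀ i, (X * B i - B i * X) * σ * (X * B i - B i * X)ᴴ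
      = ((X * B i - B i * X) * S) * ((X * B i - B i * X) * S)ᴴ := by
    intro i
    rw [conjTranspose_mul, hSherm, ← hSS]
    simp only [mul_assoc]
  have key2 : ∑ i, (((X * B i - B i * X) * S) * ((X * B i - B i * X) * S)ᴴ).trace = 0 := by
    simp only [← hterm]; exact key
  intro j
  have hz : (((X * B j - B j * X) * S) * ((X * B j - B j * X) * S)ᴴ).trace = 0 :=
    (Finset.sum_eq_zero_iff_of_nonneg
      (fun i _ => SSA.trace_mul_conjTranspose_self_nonneg' _)).mp key2 j (Finset.mem_univ j)
  have h0 : (X * B j - B j * X) * S = 0 := SSA.eq_zero_of_trace_mul_conjTranspose_self' hz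
  have h5 : X * B j - B j * X = 0 := by
    have := congrArg (fun M => M * S⁻¹) h0
    simpa [mul_assoc, Matrix.mul_nonsing_inv _ hSdet] using this
  exact sub_eq_zero.mp h5

open SSA in
/-- Let `F` be a quantum operation with Kraus operators `B_i` (so its
Hilbert–Schmidt adjoint is `F*(X) = ∑ B_i* X B_i`), admitting a faithful invariant
density operator. Then the fixed-point set `𝒜_F = {X : F*(X) = X}` is a *-subalgebra of
`B(H)` and equals the commutant `{B_i, B_i*}'`. -/
theorem statement14 {H : Type} [Fintype H] [DecidableEq H]
    (k : ℕ) (B : Fin k → Matrix H H ℂ)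
    (htp : ∑ i, (B i)ᴴ * B i = 1)
    (hfaith : ∃ σ : Matrix H H ℂ, σ.PosDef ∧ σ.trace = 1 ∧ ∑ i, B i * σ * (B i)ᴴ = σ) :
    (∑ i, (B i)ᴴ * (1 : Matrix H H ℂ) * B i = 1) ∧
    (∀ X Y : Matrix H H ℂ, (∑ i, (B i)ᴴ * X * B i = X) → (∑ i, (B i)ᴴ * Y * B i = Y) →
      (∑ i, (B i)ᴴ * (X + Y) * B i = X + Y) ∧ (∑ i, (B i)ᴴ * (X * Y) * B i = X * Y)) ∧
    (∀ (c : ℂ) (X : Matrix H H ℂ), (∑ i, (B i)ᴴ * X * B i = X) →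
      ∑ i, (B i)ᴴ * (c • X) * B i = c • X) ∧
    (∀ X : Matrix H H ℂ, (∑ i, (B i)ᴴ * X * B i = X) → ∑ i, (B i)ᴴ * Xᴴ * B i = Xᴴ) ∧
    (∀ X : Matrix H H ℂ,
      (∑ i, (B i)ᴴ * X * B i = X) ↔
      (∀ i, X * B i = B i * X ∧ X * (B i)ᴴ = (B i)ᴴ * X)) := by
  obtain ⟨σ, hσpd, hσtr, hσinv⟩ := hfaith
  have hadj : ∀ X : Matrix H H ℂ, (∑ i, (B i)ᴴ * X * B i = X) →
      ∑ i, (B i)ᴴ * Xᴴ * B i = Xᴴ := by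
    intro X hX
    calc ∑ i, (B i)ᴴ * Xᴴ * B i = (∑ i, (B i)ᴴ * X * B i)ᴴ := by
          simp [Matrix.conjTranspose_sum, Matrix.conjTranspose_mul, mul_assoc]
      _ = Xᴴ := by rw [hX]
  have hiff : ∀ X : Matrix H H ℂ, (∑ i, (B i)ᴴ * X * B i = X) ↔
      (∀ i, X * B i = B i * X ∧ X * (B i)ᴴ = (B i)ᴴ * X) := by
    intro X
    constructor
    · intro hX i
      refine ⟨SSA.comm_of_fixed' htp hσpd hσinv hX (hadj X hX) i, ?_⟩
      have h2 := SSA.comm_of_fixed' htp hσpd hσinv (hadj X hX)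
        (by simpa using hX) i
      have h3 := congrArg Matrix.conjTranspose h2
      simpa [Matrix.conjTranspose_mul] using h3.symm
    · intro hc
      calc ∑ i, (B i)ᴴ * X * B i = ∑ i, (B i)ᴴ * B i * X := by
            refine Finset.sum_congr rfl fun i _ => ?_
            rw [mul_assoc, (hc i).1, ← mul_assoc]
        _ = (∑ i, (B i)ᴴ * B i) * X := by rw [Finset.sum_mul]
        _ = X := by rw [htp, one_mul]
  refine ⟨by simpa [Matrix.mul_one] using htp, ?_, ?_, hadj, hiff⟩
  · intro X Y hX hY
    constructor
    · simp [Matrix.mul_add, Matrix.add_mul, Finset.sum_add_distrib, hX, hY]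
    · rw [hiff]
      intro i
      obtain ⟨hx1, hx2⟩ := (hiff X).mp hX i
      obtain ⟨hy1, hy2⟩ := (hiff Y).mp hY i
      exact ⟨by rw [mul_assoc, hy1, ← mul_assoc, hx1, mul_assoc],
        by rw [mul_assoc, hy2, ← mul_assoc, hx2, mul_assoc]⟩
  · intro c X hX
    simp [Matrix.mul_smul, Matrix.smul_mul, ← Finset.smul_sum, hX]
end
end

section
/- Let F : B(H) → B(H) be a quantum operation on a finite-dimensional Hilbert space H admitting a faithful (full-rank) invariant density operator, and let F* be its Hilbert–Schmidt adjoint. Then the Cesàro means (1/N) Σ_{n=1}^N (F*)^n converge as N → ∞ to a map P* which is a unital completely positive projection (conditional expectation) from B(H) onto the fixed-point algebra 𝒜_F = {X ∈ B(H) : F*(X) = X}; in particular P* ∘ P* = P*, the range of P* is 𝒜_F, and P*(X) = X for X ∈ 𝒜_F. -/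
open Matrix
open scoped Kronecker ComplexOrder

noncomputable section

namespace St15Aux

open SSA Matrix Filter Topology Finset
open scoped ComplexOrder

variable {H : Type} [Fintype H] [DecidableEq H]

lemma sumSq (M : Matrix H H ℂ) : ((Mᴴ * M).trace).re = ∑ p : H × H, ‖M p.1 p.2‖ ^ 2 := by
  rw [Matrix.trace, Fintype.sum_prod_type, Finset.sum_comm]
  simp only [Matrix.diag_apply, Matrix.mul_apply, Matrix.conjTranspose_apply]
  rw [Complex.re_sum]
  refine Finset.sum_congr rfl fun a _ => ?_
  rw [Complex.re_sum]
  refine Finset.sum_congr rfl fun b _ => ?_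
  have h : star (M b a) * M b a = ((‖M b a‖ ^ 2 : ℝ) : ℂ) := by
    rw [Complex.star_def, ← Complex.normSq_eq_conj_mul_self]
    norm_cast
    simp [Complex.normSq_eq_norm_sq]
  rw [h, Complex.ofReal_re]

open scoped MatrixOrder in
lemma exists_sqrt {n : Type} [Fintype n] [DecidableEq n] {M : Matrix n n ℂ} (h : M.PosSemidef) :
    ∃ S : Matrix n n ℂ, Sᴴ = S ∧ S * S = M :=
  ⟨CFC.sqrt M, (CFC.sqrt_nonneg M).posSemidef.1, CFC.sqrt_mul_sqrt_self M h.nonneg⟩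

/-- trace of a PSD matrix has nonnegative real part -/
lemma psd_trace_re_nonneg {M : Matrix H H ℂ} (h : M.PosSemidef) : 0 ≤ M.trace.re := by
  obtain ⟨E, hE1, rfl⟩ := exists_sqrt h
  have hEE : E * E = Eᴴ * E := by rw [hE1]
  rw [hEE, sumSq]
  positivity

/-- The Choi matrix of a map on matrices. -/
def choi (Φ : Matrix H H ℂ → Matrix H H ℂ) : Matrix (H × H) (H × H) ℂ :=
  Matrix.of fun p q => Φ (Matrix.single p.1 q.1 1) p.2 q.2

lemma conj_std_entry (A : Matrix H H ℂ) (a b c d : H) :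
    ((A * Matrix.single a b (1:ℂ) * Aᴴ) : Matrix H H ℂ) c d = A c a * (starRingEnd ℂ) (A d b) := by
  simp [Matrix.mul_apply, Matrix.conjTranspose_apply, Matrix.single, Matrix.of_apply,
    ite_and, mul_ite, ite_mul, Finset.sum_ite_eq, Finset.sum_ite_eq']

lemma cp_choi_psd {Φ : Matrix H H ℂ → Matrix H H ℂ} (h : IsCompletelyPositive Φ) :
    (choi Φ).PosSemidef := by
  obtain ⟨κ, A, hA⟩ := h
  have hrw : choi Φ = ∑ i : Fin κ,
      (Matrix.of fun (_ : Unit) p => (starRingEnd ℂ) (A i p.2 p.1) : Matrix Unit (H × H) ℂ)ᴴ *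
      (Matrix.of fun (_ : Unit) p => (starRingEnd ℂ) (A i p.2 p.1)) := by
    ext p q
    simp only [choi, Matrix.of_apply, hA, Matrix.sum_apply]
    refine Finset.sum_congr rfl fun i _ => ?_
    rw [conj_std_entry]
    simp [Matrix.mul_apply, Matrix.conjTranspose_apply, mul_comm]
  rw [hrw]
  exact Finset.sum_induction _ _ (fun a b ha hb => ha.add hb) Matrix.PosSemidef.zero
    (fun i _ => Matrix.posSemidef_conjTranspose_mul_self _)

lemma sum_swap3 {α β γ : Type*} [Fintype α] [Fintype β] [Fintype γ] (g : α → β → γ → ℂ) :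
    ∑ a, ∑ b, ∑ j, g a b j = ∑ j, ∑ a, ∑ b, g a b j :=
  calc ∑ a, ∑ b, ∑ j, g a b j = ∑ a, ∑ j, ∑ b, g a b j :=
        Finset.sum_congr rfl fun a _ => Finset.sum_comm
    _ = ∑ j, ∑ a, ∑ b, g a b j := Finset.sum_comm

lemma choi_cp {Φ : Matrix H H ℂ → Matrix H H ℂ}
    (hlin : ∀ X : Matrix H H ℂ, Φ X = ∑ a : H, ∑ b : H, X a b • Φ (Matrix.single a b 1))
    (hC : (choi Φ).PosSemidef) : IsCompletelyPositive Φ := by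
  classical
  obtain ⟨S, hS, hSS⟩ := exists_sqrt hC
  set e : Fin (Fintype.card (H × H)) ≃ (H × H) := (Fintype.equivFin (H × H)).symm with he
  refine ⟨Fintype.card (H × H), fun j => Matrix.of fun c a => S (a, c) (e j), fun X => ?_⟩
  have hentry : ∀ a b c d : H, Φ (Matrix.single a b 1) c d
      = ∑ j, S (a, c) (e j) * (starRingEnd ℂ) (S (b, d) (e j)) := by
    intro a b c d
    have h1 : Φ (Matrix.single a b 1) c d = (S * S) (a, c) (b, d) := by
      rw [hSS]; rfl
    rw [h1, Matrix.mul_apply, ← Equiv.sum_comp e (fun u => S (a,c) u * S u (b,d))]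
    refine Finset.sum_congr rfl fun j _ => ?_
    congr 1
    conv_lhs => rw [← hS]
    rfl
  have lhs_eq : ∀ c d : H, Φ X c d
      = ∑ j, ∑ a, ∑ b, S (a, c) (e j) * X a b * (starRingEnd ℂ) (S (b, d) (e j)) := by
    intro c d
    rw [hlin X]
    rw [show ((∑ a : H, ∑ b : H, X a b • Φ (Matrix.single a b 1) : Matrix H H ℂ)) c d
        = ∑ a, ∑ b, X a b * Φ (Matrix.single a b 1) c d by
      simp [Matrix.sum_apply]]
    simp_rw [hentry, Finset.mul_sum]
    rw [sum_swap3]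
    refine Finset.sum_congr rfl fun j _ => Finset.sum_congr rfl fun a _ =>
      Finset.sum_congr rfl fun b _ => by ring
  ext c d
  rw [lhs_eq c d, Matrix.sum_apply]
  refine Finset.sum_congr rfl fun j _ => ?_
  simp only [Matrix.mul_apply, Matrix.conjTranspose_apply, Matrix.of_apply, Complex.star_def,
    Finset.sum_mul]
  exact Finset.sum_comm

lemma cp_id : IsCompletelyPositive (fun X : Matrix H H ℂ => X) :=
  ⟨1, fun _ => 1, fun X => by simp⟩

lemma cp_comp {Φ Ψ : Matrix H H ℂ → Matrix H H ℂ} (hΦ : IsCompletelyPositive Φ)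
    (hΨ : IsCompletelyPositive Ψ) : IsCompletelyPositive (Φ ∘ Ψ) := by
  obtain ⟨k1, A, hA⟩ := hΦ
  obtain ⟨k2, C, hC⟩ := hΨ
  refine ⟨k2 * k1, fun j => A (finProdFinEquiv.symm j).2 * C (finProdFinEquiv.symm j).1,
    fun X => ?_⟩
  rw [Function.comp_apply, hA, hC]
  have step : ∑ i : Fin k1, (A i * ∑ j : Fin k2, C j * X * (C j)ᴴ) * (A i)ᴴ
      = ∑ p : Fin k2 × Fin k1, (A p.2 * C p.1) * X * (A p.2 * C p.1)ᴴ := by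
    rw [Fintype.sum_prod_type, Finset.sum_comm]
    refine Finset.sum_congr rfl fun i _ => ?_
    rw [Finset.mul_sum, Finset.sum_mul]
    refine Finset.sum_congr rfl fun j _ => ?_
    rw [Matrix.conjTranspose_mul]
    noncomm_ring
  rw [step]
  exact Fintype.sum_equiv finProdFinEquiv _ _ (fun p => by simp)

lemma cp_iter {Tf : Matrix H H ℂ → Matrix H H ℂ} (h : IsCompletelyPositive Tf) (n : ℕ) :
    IsCompletelyPositive (Tf^[n]) := by
  induction n with
  | zero => exact cp_id
  | succ n ih =>
    rw [Function.iterate_succ']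
    exact cp_comp h ih

lemma psd_smul_nat_inv {n : Type} [Fintype n] {M : Matrix n n ℂ} (h : M.PosSemidef) (N : ℕ) :
    ((N : ℂ)⁻¹ • M).PosSemidef := by
  have h0 : (0 : ℂ) ≤ (N : ℂ)⁻¹ := by
    rw [show ((N : ℂ))⁻¹ = (((N : ℝ)⁻¹ : ℝ) : ℂ) by push_cast; ring]
    rw [Complex.zero_le_real]
    positivity
  constructor
  · rw [Matrix.IsHermitian, Matrix.conjTranspose_smul, h.1.eq]
    congr 1
    rw [show ((N : ℂ))⁻¹ = (((N : ℝ)⁻¹ : ℝ) : ℂ) by push_cast; ring]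
    simp
  · intro x
    exact (h.smul h0).2 x

lemma psd_limit {n : Type} [Fintype n] {C : Matrix n n ℂ} {Cs : ℕ → Matrix n n ℂ}
    (hpsd : ∀ N, (Cs N).PosSemidef)
    (hconv : ∀ p q, Tendsto (fun N => Cs N p q) atTop (𝓝 (C p q))) : C.PosSemidef := by
  refine Matrix.PosSemidef.of_dotProduct_mulVec_nonneg ?_ ?_
  · ext p q
    rw [Matrix.conjTranspose_apply]
    have h1 : Tendsto (fun N => Cs N p q) atTop (𝓝 (C p q)) := hconv p q
    have h2 : Tendsto (fun N => star (Cs N q p)) atTop (𝓝 (star (C q p))) :=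
      (continuous_star.tendsto _).comp (hconv q p)
    have h3 : (fun N => star (Cs N q p)) = fun N => Cs N p q := by
      funext N
      rw [← Matrix.conjTranspose_apply, (hpsd N).1.eq]
    rw [h3] at h2
    exact tendsto_nhds_unique h2 h1
  · intro x
    have hform : ∀ (M : Matrix n n ℂ), dotProduct (star x) (M.mulVec x)
        = ∑ p, ∑ q, star (x p) * M p q * x q := by
      intro M
      rw [dotProduct]
      refine Finset.sum_congr rfl fun p _ => ?_
      rw [Matrix.mulVec, dotProduct, Finset.mul_sum]
      refine Finset.sum_congr rfl fun q _ => by simp [mul_assoc]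
    have htz : Tendsto (fun N => dotProduct (star x) ((Cs N).mulVec x)) atTop
        (𝓝 (dotProduct (star x) (C.mulVec x))) := by
      simp_rw [hform]
      refine tendsto_finset_sum _ fun p _ => tendsto_finset_sum _ fun q _ => ?_
      exact ((hconv p q).const_mul _).mul_const _
    have hnn : ∀ N, (0 : ℂ) ≤ dotProduct (star x) ((Cs N).mulVec x) := fun N => (hpsd N).dotProduct_mulVec_nonneg x
    rw [Complex.le_def]
    constructor
    · have hre : Tendsto (fun N => (dotProduct (star x) ((Cs N).mulVec x)).re) atTop
          (𝓝 ((dotProduct (star x) (C.mulVec x)).re)) :=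
        (Complex.continuous_re.tendsto _).comp htz
      refine ge_of_tendsto' hre fun N => ?_
      simpa using (Complex.le_def.mp (hnn N)).1
    · have him : Tendsto (fun N => (dotProduct (star x) ((Cs N).mulVec x)).im) atTop
          (𝓝 ((dotProduct (star x) (C.mulVec x)).im)) :=
        (Complex.continuous_im.tendsto _).comp htz
      have him0 : (fun N => (dotProduct (star x) ((Cs N).mulVec x)).im) = fun _ => (0 : ℝ) := by
        funext N
        simpa using (Complex.le_def.mp (hnn N)).2.symm
      rw [him0] at him
      simp only [Complex.zero_im]
      exact (tendsto_nhds_unique him tendsto_const_nhds).symm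

noncomputable def mL (s : Matrix H H ℂ) : Matrix H H ℂ →ₗ[ℂ] EuclideanSpace ℂ (H × H) where
  toFun X := (WithLp.linearEquiv 2 ℂ ((H × H) → ℂ)).symm fun p => (X * s) p.1 p.2
  map_add' X Y := by
    rw [show (fun p : H × H => ((X + Y) * s) p.1 p.2)
        = (fun p : H × H => (X * s) p.1 p.2) + fun p : H × H => (Y * s) p.1 p.2 from
      funext fun p => by simp [Matrix.add_mul], map_add]
  map_smul' c X := by
    rw [show (fun p : H × H => ((c • X) * s) p.1 p.2)
        = c • fun p : H × H => (X * s) p.1 p.2 from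
      funext fun p => by simp [Matrix.smul_mul], _root_.map_smul]
    rfl

noncomputable def minvL (s' : Matrix H H ℂ) : EuclideanSpace ℂ (H × H) →ₗ[ℂ] Matrix H H ℂ where
  toFun v := (Matrix.of fun a b => (WithLp.linearEquiv 2 ℂ ((H × H) → ℂ)) v (a, b)) * s'
  map_add' v w := by
    rw [show (Matrix.of fun a b => (WithLp.linearEquiv 2 ℂ ((H × H) → ℂ)) (v + w) (a, b))
        = (Matrix.of fun a b => (WithLp.linearEquiv 2 ℂ ((H × H) → ℂ)) v (a, b))
          + (Matrix.of fun a b => (WithLp.linearEquiv 2 ℂ ((H × H) → ℂ)) w (a, b)) from by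
      ext a b; simp, Matrix.add_mul]
  map_smul' c v := by
    rw [show (Matrix.of fun a b => (WithLp.linearEquiv 2 ℂ ((H × H) → ℂ)) (c • v) (a, b))
        = c • Matrix.of fun a b => (WithLp.linearEquiv 2 ℂ ((H × H) → ℂ)) v (a, b) from by
      ext a b; simp, Matrix.smul_mul]
    rfl

lemma mL_apply (s X : Matrix H H ℂ) (p : H × H) : mL s X p = (X * s) p.1 p.2 := rfl

lemma minvL_apply (s' : Matrix H H ℂ) (v : EuclideanSpace ℂ (H × H)) :
    minvL s' v = (Matrix.of fun a b => v (a, b)) * s' := rfl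

lemma minvL_mL {s s' : Matrix H H ℂ} (hss' : s * s' = 1) (X : Matrix H H ℂ) :
    minvL s' (mL s X) = X := by
  rw [minvL_apply]
  have h : (Matrix.of fun a b => (mL s X) (a, b)) = X * s := by ext a b; rfl
  rw [h, Matrix.mul_assoc, hss', Matrix.mul_one]

lemma mL_minvL {s s' : Matrix H H ℂ} (hs's : s' * s = 1) (v : EuclideanSpace ℂ (H × H)) :
    mL s (minvL s' v) = v := by
  show (WithLp.linearEquiv 2 ℂ ((H × H) → ℂ)).symm (fun p => ((minvL s' v) * s) p.1 p.2) = v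
  have h : minvL s' v * s = Matrix.of fun a b => v (a, b) := by
    rw [minvL_apply, Matrix.mul_assoc, hs's, Matrix.mul_one]
  rw [h]
  rfl

lemma norm_mL (s X : Matrix H H ℂ) : ‖mL s X‖ ^ 2 = (((X * s)ᴴ * (X * s)).trace).re := by
  rw [sumSq, EuclideanSpace.norm_eq, Real.sq_sqrt (by positivity)]
  exact Finset.sum_congr rfl fun p _ => by rw [mL_apply]

end St15Aux


section
open St15Aux

open SSA Filter Topology in
/-- For a quantum operation `F` with Kraus operators `B_i` (adjoint
`F*(X) = ∑ B_i* X B_i`) admitting a faithful invariant density operator, the Cesàro means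
`(1/N) ∑_{n=1}^N (F*)^n` converge to a unital completely positive projection
(conditional expectation) `P*` of `B(H)` onto the fixed-point algebra
`𝒜_F = {X : F*(X) = X}`. -/
theorem statement15 {H : Type} [Fintype H] [DecidableEq H]
    (k : ℕ) (B : Fin k → Matrix H H ℂ)
    (htp : ∑ i, (B i)ᴴ * B i = 1)
    (hfaith : ∃ σ : Matrix H H ℂ, σ.PosDef ∧ σ.trace = 1 ∧ ∑ i, B i * σ * (B i)ᴴ = σ) :
    ∃ Pstar : Matrix H H ℂ → Matrix H H ℂ,
      (∀ X : Matrix H H ℂ,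
        Tendsto
          (fun N : ℕ => (N : ℂ)⁻¹ •
            ∑ n ∈ Finset.range N, (fun Y => ∑ i, (B i)ᴴ * Y * B i)^[n + 1] X)
          atTop (𝓝 (Pstar X))) ∧
      Pstar 1 = 1 ∧
      IsCompletelyPositive Pstar ∧
      (∀ X, Pstar (Pstar X) = Pstar X) ∧
      Set.range Pstar = {X : Matrix H H ℂ | ∑ i, (B i)ᴴ * X * B i = X} ∧
      (∀ X : Matrix H H ℂ, (∑ i, (B i)ᴴ * X * B i = X) → Pstar X = X) := by
  classical
  obtain ⟨σ, hσ, -, hσinv⟩ := hfaith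
  have hσps := hσ.posSemidef
  obtain ⟨s, hs_herm, hss⟩ := exists_sqrt hσps
  have hdet : IsUnit s.det := by
    have h1 : s.det * s.det = σ.det := by rw [← Matrix.det_mul, hss]
    have h2 : σ.det ≠ 0 := by
      have := hσ.det_pos
      intro h
      rw [h] at this
      exact lt_irrefl _ this
    rw [isUnit_iff_ne_zero]
    intro h
    rw [h, zero_mul] at h1
    exact h2 h1.symm
  have hsinv : s * s⁻¹ = 1 := Matrix.mul_nonsing_inv s hdet
  have hsinv' : s⁻¹ * s = 1 := Matrix.nonsing_inv_mul s hdet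
  set Tf : Matrix H H ℂ → Matrix H H ℂ := fun Y => ∑ i, (B i)ᴴ * Y * B i with hTf
  set TfL : Matrix H H ℂ →ₗ[ℂ] Matrix H H ℂ :=
    ∑ i, (LinearMap.mulRight ℂ (B i)).comp (LinearMap.mulLeft ℂ (B i)ᴴ) with hTfL
  have hTfL_apply : ∀ X, TfL X = Tf X := by
    intro X
    simp [TfL, Tf, LinearMap.sum_apply]
  -- invariance of σ under the trace dual
  have htraceT : ∀ Y : Matrix H H ℂ, (Tf Y * σ).trace = (Y * σ).trace := by
    intro Y
    rw [hTf]
    dsimp only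
    rw [Finset.sum_mul, Matrix.trace_sum]
    have h1 : ∀ i, ((B i)ᴴ * Y * B i * σ).trace = (Y * (B i * σ * (B i)ᴴ)).trace := by
      intro i
      rw [show (B i)ᴴ * Y * B i * σ = (B i)ᴴ * (Y * (B i * σ)) by noncomm_ring,
        Matrix.trace_mul_comm,
        show Y * (B i * σ) * (B i)ᴴ = Y * (B i * σ * (B i)ᴴ) by noncomm_ring]
    simp_rw [h1]
    rw [← Matrix.trace_sum, ← Finset.mul_sum, hσinv]
  -- Kadison–Schwarz identity
  have hKS : ∀ X : Matrix H H ℂ, Tf (Xᴴ * X)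
      = (Tf X)ᴴ * Tf X
        + ∑ i, (X * B i - B i * Tf X)ᴴ * (X * B i - B i * Tf X) := by
    intro X
    have hTconj : (Tf X)ᴴ = ∑ i, (B i)ᴴ * Xᴴ * B i := by
      rw [hTf]
      dsimp only
      rw [Matrix.conjTranspose_sum]
      exact Finset.sum_congr rfl fun i _ => by
        rw [Matrix.conjTranspose_mul, Matrix.conjTranspose_mul,
          Matrix.conjTranspose_conjTranspose]
        noncomm_ring
    have hexp : ∀ i, (X * B i - B i * Tf X)ᴴ * (X * B i - B i * Tf X)
        = (B i)ᴴ * (Xᴴ * X) * B i - ((B i)ᴴ * Xᴴ * B i) * Tf X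
          - (Tf X)ᴴ * ((B i)ᴴ * X * B i) + (Tf X)ᴴ * ((B i)ᴴ * B i) * Tf X := by
      intro i
      rw [Matrix.conjTranspose_sub, Matrix.conjTranspose_mul, Matrix.conjTranspose_mul]
      noncomm_ring
    rw [show (∑ i, (X * B i - B i * Tf X)ᴴ * (X * B i - B i * Tf X))
        = Tf (Xᴴ * X) - (∑ i, (B i)ᴴ * Xᴴ * B i) * Tf X
          - (Tf X)ᴴ * (∑ i, (B i)ᴴ * X * B i) + (Tf X)ᴴ * (∑ i, (B i)ᴴ * B i) * Tf X from by
      simp_rw [hexp]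
      rw [Finset.sum_add_distrib, Finset.sum_sub_distrib, Finset.sum_sub_distrib,
        ← Finset.sum_mul, ← Finset.mul_sum, ← Finset.sum_mul, ← Finset.mul_sum]]
    rw [← hTconj, htp]
    have hTX : (∑ i, (B i)ᴴ * X * B i) = Tf X := rfl
    rw [hTX]
    noncomm_ring
  -- contraction property
  have hq : ∀ X : Matrix H H ℂ, ‖mL s (Tf X)‖ ≤ ‖mL s X‖ := by
    intro X
    have hsq : ‖mL s (Tf X)‖ ^ 2 ≤ ‖mL s X‖ ^ 2 := by
      rw [norm_mL, norm_mL]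
      have hform : ∀ M : Matrix H H ℂ, ((M * s)ᴴ * (M * s)).trace = (Mᴴ * M * σ).trace := by
        intro M
        rw [Matrix.conjTranspose_mul, hs_herm,
          show s * Mᴴ * (M * s) = s * (Mᴴ * M) * s by noncomm_ring,
          Matrix.trace_mul_cycle, show s * s * (Mᴴ * M) = σ * (Mᴴ * M) by rw [hss],
          Matrix.trace_mul_comm]
      rw [hform, hform]
      have hD : (0:ℝ) ≤ (((∑ i, (X * B i - B i * Tf X)ᴴ * (X * B i - B i * Tf X)) * σ).trace).re := by
        set D := ∑ i, (X * B i - B i * Tf X)ᴴ * (X * B i - B i * Tf X) with hDdef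
        have hDpsd : D.PosSemidef :=
          Finset.sum_induction _ _ (fun a b ha hb => ha.add hb) Matrix.PosSemidef.zero
            (fun i _ => Matrix.posSemidef_conjTranspose_mul_self _)
        have : (D * σ).trace = (sᴴ * D * s).trace := by
          rw [hs_herm, ← hss, show D * (s * s) = D * s * s by noncomm_ring,
            Matrix.trace_mul_cycle]
        rw [this]
        exact psd_trace_re_nonneg (hDpsd.conjTranspose_mul_mul_same s)
      have hsum : ((Tf X)ᴴ * Tf X * σ).trace
          = (Xᴴ * X * σ).trace
            - ((∑ i, (X * B i - B i * Tf X)ᴴ * (X * B i - B i * Tf X)) * σ).trace := by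
        have h2 : (Tf (Xᴴ * X) * σ).trace = (Xᴴ * X * σ).trace := htraceT _
        rw [hKS X] at h2
        rw [Matrix.add_mul, Matrix.trace_add] at h2
        linear_combination h2
      rw [hsum]
      have := hD
      rw [Complex.sub_re]
      linarith
    have h := Real.sqrt_le_sqrt hsq
    rwa [Real.sqrt_sq (norm_nonneg _), Real.sqrt_sq (norm_nonneg _)] at h
  set g0 : EuclideanSpace ℂ (H × H) →ₗ[ℂ] EuclideanSpace ℂ (H × H) :=
    (mL s).comp (TfL.comp (minvL s⁻¹)) with hg0
  set g : EuclideanSpace ℂ (H × H) →L[ℂ] EuclideanSpace ℂ (H × H) :=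
    LinearMap.toContinuousLinearMap g0 with hg
  have hg_apply : ∀ v, g v = mL s (Tf (minvL s⁻¹ v)) := by
    intro v
    show g0 v = _
    rw [hg0]
    simp only [LinearMap.comp_apply]
    rw [hTfL_apply]
  have hgnorm : ‖g‖ ≤ 1 := by
    refine ContinuousLinearMap.opNorm_le_bound g zero_le_one fun v => ?_
    rw [hg_apply, one_mul]
    conv_rhs => rw [← mL_minvL hsinv' v]
    exact hq _
  set S : Submodule ℂ (EuclideanSpace ℂ (H × H)) :=
    LinearMap.eqLocus (g : EuclideanSpace ℂ (H × H) →ₗ[ℂ] EuclideanSpace ℂ (H × H)) 1 with hS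
  set Pst : Matrix H H ℂ → Matrix H H ℂ :=
    fun X => minvL s⁻¹ ((S.orthogonalProjectionOnto (mL s (Tf X)) : EuclideanSpace ℂ (H × H)))
    with hPst
  have hiter : ∀ (n : ℕ) (X : Matrix H H ℂ), g^[n] (mL s X) = mL s (Tf^[n] X) := by
    intro n
    induction n with
    | zero => intro X; simp
    | succ n ih =>
      intro X
      rw [Function.iterate_succ_apply', Function.iterate_succ_apply', ih X, hg_apply,
        minvL_mL hsinv]
  -- the main convergence statement
  have hmain : ∀ X, Tendsto (fun N : ℕ => (N : ℂ)⁻¹ • ∑ n ∈ Finset.range N, Tf^[n + 1] X)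
      atTop (𝓝 (Pst X)) := by
    intro X
    have h1 := g.tendsto_birkhoffAverage_orthogonalProjection (𝕜 := ℂ) hgnorm (mL s (Tf X))
    have h2 : Tendsto (fun N => minvL s⁻¹ (birkhoffAverage ℂ g _root_.id N (mL s (Tf X))))
        atTop (𝓝 (Pst X)) :=
      ((minvL s⁻¹).continuous_of_finiteDimensional.tendsto _).comp h1
    have heq : (fun N : ℕ => (N : ℂ)⁻¹ • ∑ n ∈ Finset.range N, Tf^[n + 1] X)
        = fun N => minvL s⁻¹ (birkhoffAverage ℂ g _root_.id N (mL s (Tf X))) := by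
      funext N
      rw [birkhoffAverage, birkhoffSum, _root_.map_smul, map_sum]
      congr 1
      refine Finset.sum_congr rfl fun n _ => ?_
      rw [id_eq, hiter n (Tf X), minvL_mL hsinv, ← Function.iterate_succ_apply]
    rw [heq]
    exact h2
  have hfixed_of : ∀ X, Tf X = X → Pst X = X := by
    intro X hX
    have hmem : mL s X ∈ S := by
      rw [hS, LinearMap.mem_eqLocus]
      rw [Module.End.one_apply, ContinuousLinearMap.coe_coe, hg_apply, minvL_mL hsinv, hX]
    have hproj : (S.orthogonalProjectionOnto (mL s X) : EuclideanSpace ℂ (H × H)) = mL s X :=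
      congrArg Subtype.val (Submodule.orthogonalProjectionOnto_mem_subspace_eq_self (⟨mL s X, hmem⟩ : S))
    rw [hPst]
    dsimp only
    rw [hX, hproj, minvL_mL hsinv]
  have hPfix : ∀ X, Tf (Pst X) = Pst X := by
    intro X
    have hmem := (S.orthogonalProjectionOnto (mL s (Tf X))).2
    rw [hS, LinearMap.mem_eqLocus, Module.End.one_apply, ContinuousLinearMap.coe_coe,
      hg_apply] at hmem
    have := congrArg (minvL s⁻¹) hmem
    rw [minvL_mL hsinv] at this
    exact this
  have h1fix : Tf 1 = 1 := by
    have hmo : ∀ i, (B i)ᴴ * 1 * B i = (B i)ᴴ * B i := fun i => by rw [Matrix.mul_one]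
    rw [hTf]
    dsimp only
    simp_rw [hmo]
    exact htp
  -- complete positivity
  have hTfCP : IsCompletelyPositive Tf :=
    ⟨k, fun i => (B i)ᴴ, fun X => by
      rw [hTf]
      exact Finset.sum_congr rfl fun i _ => by rw [Matrix.conjTranspose_conjTranspose]⟩
  have hlin : ∀ X : Matrix H H ℂ, Pst X = ∑ a, ∑ b, X a b • Pst (Matrix.single a b 1) := by
    intro X
    set PstL : Matrix H H ℂ →ₗ[ℂ] Matrix H H ℂ :=
      (minvL s⁻¹).comp ((S.subtype.comp (S.orthogonalProjectionOnto.toLinearMap.comp (mL s))).comp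
        TfL) with hPstL
    have hPstL_apply : ∀ Y, PstL Y = Pst Y := by
      intro Y
      rw [hPstL, hPst]
      simp only [LinearMap.comp_apply, hTfL_apply, ContinuousLinearMap.coe_coe,
        Submodule.coe_subtype]
    rw [← hPstL_apply]
    conv_lhs => rw [matrix_eq_sum_single X]
    rw [map_sum]
    refine Finset.sum_congr rfl fun a _ => ?_
    rw [map_sum]
    refine Finset.sum_congr rfl fun b _ => ?_
    rw [show Matrix.single a b (X a b) = X a b • Matrix.single a b (1 : ℂ) from by
      rw [Matrix.smul_single, smul_eq_mul, mul_one], _root_.map_smul, hPstL_apply]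
  have hchoiN : ∀ N : ℕ,
      (choi (fun X : Matrix H H ℂ => (N : ℂ)⁻¹ • ∑ n ∈ Finset.range N, Tf^[n + 1] X)).PosSemidef := by
    intro N
    have hrw : choi (fun X : Matrix H H ℂ => (N : ℂ)⁻¹ • ∑ n ∈ Finset.range N, Tf^[n + 1] X)
        = (N : ℂ)⁻¹ • ∑ n ∈ Finset.range N, choi (Tf^[n + 1]) := by
      ext p q
      simp [choi, Matrix.sum_apply, Matrix.smul_apply, Finset.smul_sum]
    rw [hrw]
    refine psd_smul_nat_inv ?_ N
    exact Finset.sum_induction _ _ (fun a b ha hb => ha.add hb) Matrix.PosSemidef.zero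
      (fun n _ => cp_choi_psd (cp_iter hTfCP (n + 1)))
  have hchoi_lim : (choi Pst).PosSemidef := by
    refine psd_limit hchoiN ?_
    intro p q
    exact ((continuous_id.matrix_elem p.2 q.2).tendsto _).comp (hmain (Matrix.single p.1 q.1 1))
  have hCP : IsCompletelyPositive Pst := choi_cp hlin hchoi_lim
  refine ⟨Pst, hmain, hfixed_of 1 h1fix, hCP, fun X => hfixed_of _ (hPfix X), ?_, hfixed_of⟩
  ext X
  constructor
  · rintro ⟨Y, rfl⟩
    exact hPfix Y
  · intro hX
    exact ⟨X, hfixed_of X hX⟩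

end
end
end
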